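/- arXiv:0811.3779 — 2 statements merged into one kernel-verified Lean document; each statement's English description precedes it below -/
import Mathlib

section
/- Let G=(V,E) be a finite simple undirected graph and let S ⊆ V have μ(S) > 0. Define the growth gauge ψ(S) by 1 − ψ(S) = E_S[√(μ(S₁)/μ(S))], where S₁ is one step of the evolving set process from S. Then ψ(S) ≥ φ(S)²/8. -/
open scoped Classical symmDiff

noncomputable section

variable {V : Type*} [Fintype V] [DecidableEq V]

/-- The volume `μ(S)` of a set of vertices: the sum of the degrees. -/
def vol (G : SimpleGraph V) [DecidableRel G.Adj] (S : Finset V) : ℝ :=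
  ∑ x ∈ S, (G.degree x : ℝ)

/-- The number of edges leaving `S`, i.e. `∂(S) = e(S, Sᶜ)`. -/
def bdry (G : SimpleGraph V) [DecidableRel G.Adj] (S : Finset V) : ℝ :=
  ∑ x ∈ S, ((Sᶜ.filter (G.Adj x)).card : ℝ)

/-- The conductance `φ(S) = ∂(S)/μ(S)`. -/
def phiCond (G : SimpleGraph V) [DecidableRel G.Adj] (S : Finset V) : ℝ :=
  bdry G S / vol G S

/-- The lazy random walk kernel `p(x,y)`: `1/2` if `x = y`, `1/(2 d(x))` if `x ~ y`,
and `0` otherwise. -/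
def walkP (G : SimpleGraph V) [DecidableRel G.Adj] (x y : V) : ℝ :=
  if x = y then 1/2 else if G.Adj x y then 1 / (2 * (G.degree x : ℝ)) else 0

/-- `p(x,S) = Σ_{y∈S} p(x,y)`. -/
def pset (G : SimpleGraph V) [DecidableRel G.Adj] (x : V) (S : Finset V) : ℝ :=
  ∑ y ∈ S, walkP G x y

/-- One step of the evolving set process from `S` with threshold `u`:
`S₁ = {y : p(y,S) ≥ u}`. -/
def esStep (G : SimpleGraph V) [DecidableRel G.Adj] (S : Finset V) (u : ℝ) : Finset V :=
  Finset.univ.filter fun y => u ≤ pset G y S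

/-- The ESP transition kernel `K(S,S')`: the probability, for a uniform threshold
`U ∈ [0,1]`, that `{y : p(y,S) ≥ U} = S'`. -/
def Kk (G : SimpleGraph V) [DecidableRel G.Adj] (S S' : Finset V) : ℝ :=
  (MeasureTheory.volume {u : ℝ | u ∈ Set.Icc (0:ℝ) 1 ∧ esStep G S u = S'}).toReal

/-- The volume-biased ESP transition kernel `K̂(S,S') = (μ(S')/μ(S)) K(S,S')`. -/
def Khat (G : SimpleGraph V) [DecidableRel G.Adj] (S S' : Finset V) : ℝ :=
  vol G S' / vol G S * Kk G S S'

/-- The growth gauge `ψ(S)`, defined by `1 - ψ(S) = E_S[√(μ(S₁)/μ(S))]` where the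
expectation is over one step of the evolving set process from `S`. -/
def psi (G : SimpleGraph V) [DecidableRel G.Adj] (S : Finset V) : ℝ :=
  1 - ∑ S' : Finset V, Kk G S S' * Real.sqrt (vol G S' / vol G S)

/-! Split the uniform threshold `U` of the evolving set step at `1/2`. A vertex `y` lies in
`S₁` iff `U ≤ p(y,S)`, and `p(y,S) = [y ∈ S]/2 + |N(y) ∩ S|/(2 d(y))` lies in `[1/2, 1]` on `S`
and in `[0, 1/2]` off `S`. Counting vertex by vertex therefore gives
`E[μ(S₁); U ≤ 1/2] = (μ(S) + ∂(S))/2` and `E[μ(S₁); U > 1/2] = (μ(S) - ∂(S))/2`, and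
Cauchy–Schwarz on each half gives `1 - ψ(S) ≤ (√(1 + φ) + √(1 - φ))/2 ≤ 1 - φ²/8`. -/

open Finset MeasureTheory Set

theorem sqrt_one_add_add_sqrt_one_sub_le {t : ℝ} (ht : |t| ≤ 1) :
    √(1 + t) + √(1 - t) ≤ 2 - t ^ 2 / 4 := by
  obtain ⟨h₁, h₂⟩ := abs_le.mp ht
  have ha := Real.sq_sqrt (show 0 ≤ 1 + t by linarith)
  have hb := Real.sq_sqrt (show 0 ≤ 1 - t by linarith)
  nlinarith [Real.sqrt_nonneg (1 + t), Real.sqrt_nonneg (1 - t),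
    sq_nonneg (√(1 + t) - √(1 - t)), sq_nonneg (√(1 + t) + √(1 - t) - 2)]

theorem Real.sum_mul_sqrt_le {ι : Type*} (s : Finset ι) {w x : ι → ℝ}
    (hw : ∀ i, 0 ≤ w i) (hx : ∀ i, 0 ≤ x i) :
    ∑ i ∈ s, w i * √(x i) ≤ √((∑ i ∈ s, w i) * ∑ i ∈ s, w i * x i) := by
  calc ∑ i ∈ s, w i * √(x i) = ∑ i ∈ s, √(w i) * √(w i * x i) := by
        refine sum_congr rfl fun i _ => ?_
        rw [Real.sqrt_mul (hw i), ← mul_assoc, Real.mul_self_sqrt (hw i)]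
    _ ≤ √(∑ i ∈ s, w i) * √(∑ i ∈ s, w i * x i) :=
        Real.sum_sqrt_mul_sqrt_le s hw fun i => mul_nonneg (hw i) (hx i)
    _ = _ := (Real.sqrt_mul (sum_nonneg fun i _ => hw i) _).symm

theorem sum_measureReal_preimage_singleton_univ {α β : Type*} [MeasurableSpace α] [Fintype β]
    (ν : Measure α) [IsFiniteMeasure ν] {T : α → β} (hT : ∀ b, MeasurableSet (T ⁻¹' {b})) :
    ∑ b, ν.real (T ⁻¹' {b}) = ν.real univ := by
  rw [sum_measureReal_preimage_singleton _ fun b _ => hT b, coe_univ, preimage_univ]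

theorem sum_measureReal_preimage_singleton_mul_sum {α ι : Type*} [MeasurableSpace α] [Fintype ι]
    (ν : Measure α) [IsFiniteMeasure ν] {T : α → Finset ι}
    (hT : ∀ S', MeasurableSet (T ⁻¹' {S'})) (c : ι → ℝ) :
    ∑ S', ν.real (T ⁻¹' {S'}) * ∑ y ∈ S', c y = ∑ y, c y * ν.real {a | y ∈ T a} := by
  have hfib : ∀ y, ∑ S', (if y ∈ S' then ν.real (T ⁻¹' {S'}) else 0) = ν.real {a | y ∈ T a} := by
    intro y
    rw [← sum_filter, sum_measureReal_preimage_singleton _ fun S' _ => hT S']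
    congr 1
    ext a
    simp
  calc ∑ S', ν.real (T ⁻¹' {S'}) * ∑ y ∈ S', c y
      = ∑ S', ∑ y, (if y ∈ S' then ν.real (T ⁻¹' {S'}) * c y else 0) := by
        refine sum_congr rfl fun S' _ => ?_
        rw [mul_sum, ← sum_filter, filter_mem_eq_inter, Finset.univ_inter]
    _ = ∑ y, c y * ∑ S', (if y ∈ S' then ν.real (T ⁻¹' {S'}) else 0) := by
        rw [sum_comm]
        refine sum_congr rfl fun y _ => ?_
        rw [mul_sum]
        refine sum_congr rfl fun S' _ => ?_
        split_ifs <;> ring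
    _ = _ := by simp_rw [hfib]

theorem Real.volume_real_Iic_inter_Icc {p b : ℝ} (hp : 0 ≤ p) (hb : 0 ≤ b) :
    volume.real (Iic p ∩ Icc 0 b) = min p b := by
  have : Iic p ∩ Icc 0 b = Icc 0 (min p b) := by
    ext u; simp only [mem_inter_iff, Set.mem_Iic, Set.mem_Icc, le_min_iff]; tauto
  rw [this, Real.volume_real_Icc_of_le (le_min hp hb), sub_zero]

theorem Real.volume_real_Iic_inter_Ioc {p a b : ℝ} (hpb : p ≤ b) :
    volume.real (Iic p ∩ Ioc a b) = max (p - a) 0 := by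
  rw [Iic_inter_Ioc_of_le hpb, Real.volume_real_Ioc]

section Degree

variable {α : Type*} [Fintype α] (G : SimpleGraph α) [DecidableRel G.Adj]

theorem card_filter_adj_le_degree (x : α) (T : Finset α) : #(T.filter (G.Adj x)) ≤ G.degree x := by
  rw [← G.card_neighborFinset_eq_degree]
  exact card_le_card fun y hy => by simpa using (mem_filter.1 hy).2

theorem degree_mul_card_filter_adj_div (x : α) (T : Finset α) :
    (G.degree x : ℝ) * (#(T.filter (G.Adj x)) / (2 * G.degree x)) = #(T.filter (G.Adj x)) / 2 := by
  rcases Nat.eq_zero_or_pos (G.degree x) with h | h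
  · simp [h, Nat.le_zero.mp (h ▸ card_filter_adj_le_degree G x T)]
  · field_simp

theorem card_filter_adj_div_le_half (x : α) (T : Finset α) :
    (#(T.filter (G.Adj x)) : ℝ) / (2 * G.degree x) ≤ 1 / 2 := by
  rcases Nat.eq_zero_or_pos (G.degree x) with h | h
  · simp [h]
  · rw [div_le_iff₀ (by positivity)]
    have : (#(T.filter (G.Adj x)) : ℝ) ≤ G.degree x := by
      exact_mod_cast card_filter_adj_le_degree G x T
    linarith

end Degree

section Graph

variable (G : SimpleGraph V) [DecidableRel G.Adj] (S : Finset V)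

theorem pset_eq (x : V) :
    pset G x S = (if x ∈ S then 1 / 2 else 0) + #(S.filter (G.Adj x)) / (2 * G.degree x) := by
  have hwalk : ∀ y, walkP G x y
      = (if x = y then 1 / 2 else 0) + if G.Adj x y then 1 / (2 * (G.degree x : ℝ)) else 0 := by
    intro y
    unfold walkP
    split_ifs <;> simp_all
  simp_rw [pset, hwalk, sum_add_distrib, sum_ite_eq, ← sum_filter, sum_const, nsmul_eq_mul]
  ring

theorem degree_eq_card_filter_adj_add (x : V) :
    (G.degree x : ℝ) = #(S.filter (G.Adj x)) + #(Sᶜ.filter (G.Adj x)) := by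
  rw [← G.card_neighborFinset_eq_degree, G.neighborFinset_eq_filter]
  simp_rw [card_filter]
  push_cast
  exact (sum_add_sum_compl S _).symm

theorem sum_compl_card_filter_adj :
    ∑ x ∈ Sᶜ, (#(S.filter (G.Adj x)) : ℝ) = bdry G S := by
  have := sum_card_bipartiteAbove_eq_sum_card_bipartiteBelow (s := S) (t := Sᶜ) (r := G.Adj)
  simp only [bipartiteAbove, bipartiteBelow, G.adj_comm _] at this
  rw [bdry]
  exact_mod_cast this.symm

theorem bdry_le_vol : bdry G S ≤ vol G S :=
  sum_le_sum fun x _ => by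
    rw [degree_eq_card_filter_adj_add G S x]
    exact le_add_of_nonneg_left (Nat.cast_nonneg _)

theorem abs_phiCond_le_one (hS : 0 < vol G S) : |phiCond G S| ≤ 1 := by
  have hbdry : 0 ≤ bdry G S := sum_nonneg fun _ _ => Nat.cast_nonneg _
  rw [abs_le, phiCond]
  exact ⟨by linarith [div_nonneg hbdry hS.le], (div_le_one hS).2 (bdry_le_vol G S)⟩

theorem degree_mul_volume_real_lowerHalf (y : V) :
    (G.degree y : ℝ) * volume.real (Iic (pset G y S) ∩ Icc 0 (1 / 2))
      = (if y ∈ S then (G.degree y : ℝ) else #(S.filter (G.Adj y))) / 2 := by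
  have hq₀ : (0 : ℝ) ≤ #(S.filter (G.Adj y)) / (2 * G.degree y) := by positivity
  have hq₁ := card_filter_adj_div_le_half G y S
  have hp : 0 ≤ pset G y S := by rw [pset_eq]; split_ifs <;> linarith
  rw [Real.volume_real_Iic_inter_Icc hp (by norm_num), pset_eq]
  split_ifs
  · rw [min_eq_right (by linarith)]; ring
  · rw [zero_add, min_eq_left hq₁, degree_mul_card_filter_adj_div]

theorem degree_mul_volume_real_upperHalf (y : V) :
    (G.degree y : ℝ) * volume.real (Iic (pset G y S) ∩ Ioc (1 / 2) 1)
      = if y ∈ S then (#(S.filter (G.Adj y)) : ℝ) / 2 else 0 := by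
  have hq₀ : (0 : ℝ) ≤ #(S.filter (G.Adj y)) / (2 * G.degree y) := by positivity
  have hq₁ := card_filter_adj_div_le_half G y S
  have hp : pset G y S ≤ 1 := by rw [pset_eq]; split_ifs <;> linarith
  rw [Real.volume_real_Iic_inter_Ioc hp, pset_eq]
  split_ifs
  · rw [add_sub_cancel_left, max_eq_left hq₀, degree_mul_card_filter_adj_div]
  · rw [max_eq_right (by linarith), mul_zero]

theorem sum_degree_mul_volume_real_lowerHalf :
    ∑ y, (G.degree y : ℝ) * volume.real (Iic (pset G y S) ∩ Icc 0 (1 / 2))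
      = (vol G S + bdry G S) / 2 := by
  simp_rw [degree_mul_volume_real_lowerHalf, ← sum_div, ← sum_add_sum_compl S]
  rw [sum_congr rfl fun y hy => if_pos hy, sum_congr rfl fun y hy => if_neg (mem_compl.1 hy),
    sum_compl_card_filter_adj, vol]

theorem sum_degree_mul_volume_real_upperHalf :
    ∑ y, (G.degree y : ℝ) * volume.real (Iic (pset G y S) ∩ Ioc (1 / 2) 1)
      = (vol G S - bdry G S) / 2 := by
  simp_rw [degree_mul_volume_real_upperHalf, ← sum_add_sum_compl S]
  rw [sum_congr rfl fun y hy => if_pos hy, sum_congr rfl fun y hy => if_neg (mem_compl.1 hy),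
    sum_const_zero, add_zero, ← sum_div, vol, bdry, ← sum_sub_distrib]
  simp_rw [degree_eq_card_filter_adj_add G S, add_sub_cancel_right]

end Graph

section EvolvingSet

variable (G : SimpleGraph V) [DecidableRel G.Adj] (S : Finset V)

theorem measurableSet_esStep_preimage (S' : Finset V) :
    MeasurableSet (esStep G S ⁻¹' {S'}) := by
  have : esStep G S ⁻¹' {S'} = ⋂ y, {u | u ≤ pset G y S ↔ y ∈ S'} := by
    ext u
    simp [esStep, Finset.ext_iff]
  rw [this]
  refine MeasurableSet.iInter fun y => ?_
  by_cases hy : y ∈ S'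
  · simp only [hy, iff_true]
    exact measurableSet_Iic
  · simp only [hy, iff_false, not_le]
    exact measurableSet_Ioi

theorem Kk_eq_add (S' : Finset V) :
    Kk G S S' = (volume.restrict (Icc 0 (1 / 2))).real (esStep G S ⁻¹' {S'})
      + (volume.restrict (Ioc (1 / 2) 1)).real (esStep G S ⁻¹' {S'}) := by
  rw [← measureReal_add_apply, ← Measure.restrict_union
    ((Set.Iic_disjoint_Ioc le_rfl).mono_left Set.Icc_subset_Iic_self) measurableSet_Ioc,
    Set.Icc_union_Ioc_eq_Icc (by norm_num) (by norm_num),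
    measureReal_restrict_apply (measurableSet_esStep_preimage G S S'), Set.inter_comm]
  rfl

theorem sum_measureReal_esStep_mul_vol (ν : Measure ℝ) [IsFiniteMeasure ν] :
    ∑ S', ν.real (esStep G S ⁻¹' {S'}) * vol G S'
      = ∑ y, (G.degree y : ℝ) * ν.real (Iic (pset G y S)) := by
  simp only [vol]
  rw [sum_measureReal_preimage_singleton_mul_sum ν (measurableSet_esStep_preimage G S)]
  congr! 3
  ext u
  simp [esStep]

theorem sum_measureReal_esStep_mul_sqrt_le (ν : Measure ℝ) [IsFiniteMeasure ν]
    (hS : 0 < vol G S) :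
    ∑ S', ν.real (esStep G S ⁻¹' {S'}) * √(vol G S' / vol G S)
      ≤ √(ν.real univ * (∑ y, (G.degree y : ℝ) * ν.real (Iic (pset G y S))) / vol G S) := by
  have hvol : ∀ S', 0 ≤ vol G S' / vol G S := fun S' =>
    div_nonneg (sum_nonneg fun _ _ => Nat.cast_nonneg _) hS.le
  refine (Real.sum_mul_sqrt_le _ (fun _ => measureReal_nonneg) hvol).trans_eq ?_
  simp_rw [← mul_div_assoc, ← sum_div, sum_measureReal_esStep_mul_vol,
    sum_measureReal_preimage_singleton_univ ν (measurableSet_esStep_preimage G S),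
    mul_div_assoc]

theorem sum_lowerHalf_esStep_mul_sqrt_le (hS : 0 < vol G S) :
    ∑ S', (volume.restrict (Icc 0 (1 / 2))).real (esStep G S ⁻¹' {S'}) * √(vol G S' / vol G S)
      ≤ √(1 + phiCond G S) / 2 := by
  refine (sum_measureReal_esStep_mul_sqrt_le G S _ hS).trans_eq ?_
  simp_rw [measureReal_restrict_apply measurableSet_Iic, measureReal_restrict_apply_univ,
    Real.volume_real_Icc_of_le (show (0 : ℝ) ≤ 1 / 2 by norm_num),
    sum_degree_mul_volume_real_lowerHalf]
  rw [show (1 / 2 - 0) * ((vol G S + bdry G S) / 2) / vol G S = (1 + phiCond G S) / 2 ^ 2 by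
      rw [phiCond]; field_simp; ring,
    Real.sqrt_div' _ (by positivity), Real.sqrt_sq (by norm_num)]

theorem sum_upperHalf_esStep_mul_sqrt_le (hS : 0 < vol G S) :
    ∑ S', (volume.restrict (Ioc (1 / 2) 1)).real (esStep G S ⁻¹' {S'}) * √(vol G S' / vol G S)
      ≤ √(1 - phiCond G S) / 2 := by
  refine (sum_measureReal_esStep_mul_sqrt_le G S _ hS).trans_eq ?_
  simp_rw [measureReal_restrict_apply measurableSet_Iic, measureReal_restrict_apply_univ,
    Real.volume_real_Ioc_of_le (show (1 / 2 : ℝ) ≤ 1 by norm_num),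
    sum_degree_mul_volume_real_upperHalf]
  rw [show (1 - 1 / 2) * ((vol G S - bdry G S) / 2) / vol G S = (1 - phiCond G S) / 2 ^ 2 by
      rw [phiCond]; field_simp; ring,
    Real.sqrt_div' _ (by positivity), Real.sqrt_sq (by norm_num)]

end EvolvingSet

/-- Proposition 2: for any set `S` with `μ(S) > 0`, the growth gauge and conductance
satisfy `ψ(S) ≥ φ(S)²/8`. -/
theorem statement2 (G : SimpleGraph V) [DecidableRel G.Adj]
    (S : Finset V) (hS : 0 < vol G S) :
    phiCond G S ^ 2 / 8 ≤ psi G S := by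
  have hlower := sum_lowerHalf_esStep_mul_sqrt_le G S hS
  have hupper := sum_upperHalf_esStep_mul_sqrt_le G S hS
  have hsqrt := sqrt_one_add_add_sqrt_one_sub_le (abs_phiCond_le_one G S hS)
  rw [psi]
  simp_rw [Kk_eq_add, add_mul, sum_add_distrib]
  linarith
end
end

section
/- Let G=(V,E) be a finite simple undirected graph, let A ⊆ V be nonempty, and let T be a nonnegative integer. For a vertex x, let esc(x,T,A) be the probability that a lazy random walk started from x leaves A within the first T steps. Then (1/μ(A)) · Σ_{x∈A} d(x) · esc(x,T,A) ≤ T·φ(A)/2. -/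
open scoped Classical symmDiff

noncomputable section

variable {V : Type*} [Fintype V] [DecidableEq V]

/-- `esc(x,T,A)`: the probability that the lazy random walk started from `x`
leaves `A` within the first `T` steps. -/
def escProb (G : SimpleGraph V) [DecidableRel G.Adj] (x : V) (T : ℕ) (A : Finset V) : ℝ :=
  ∑ v : Fin (T+1) → V,
    if v 0 = x ∧ ∃ j : Fin (T+1), v j ∉ A
    then ∏ j : Fin T, walkP G (v j.castSucc) (v j.succ) else 0

/-!
Write `ε_T = Σ_{x∈A} d(x) esc(x,T,A)`. From `x ∈ A` the walk escapes within `T + 1` steps iff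
after its first step it escapes within `T` steps, and reversibility `d(x) p(x,y) = d(y) p(y,x)`
turns this into `ε_{T+1} = Σ_y d(y) esc(y,T,A) p(y,A)`. The vertices `y ∈ A` contribute at most
`ε_T`, the vertices `y ∉ A` at most `Σ_{y∉A} d(y) p(y,A) = ∂(A)/2`; hence `ε_T ≤ T ∂(A)/2`
by induction from `ε_0 = 0`, and dividing by `μ(A)` gives the claim.
-/

open Finset

section Paths

variable {α : Type*}

lemma sum_fun_fin_succ [Fintype α] {n : ℕ} (F : (Fin (n + 1) → α) → ℝ) :
    ∑ v, F v = ∑ y, ∑ w : Fin n → α, F (Fin.cons y w) := by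
  rw [← (Fin.consEquiv fun _ => α).sum_comp, Fintype.sum_prod_type]
  rfl

lemma SimpleGraph.card_filter_adj_le_degree [Fintype α] (G : SimpleGraph α) [DecidableRel G.Adj]
    (x : α) (S : Finset α) : #(S.filter (G.Adj x)) ≤ G.degree x := by
  rw [← G.card_neighborFinset_eq_degree]
  exact card_le_card fun y hy => (G.mem_neighborFinset x y).2 (mem_filter.1 hy).2

variable (P : α → α → ℝ)

def pathWeight {T : ℕ} (v : Fin (T + 1) → α) : ℝ :=
  ∏ j : Fin T, P (v j.castSucc) (v j.succ)

lemma pathWeight_cons {T : ℕ} (x : α) (w : Fin (T + 1) → α) :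
    pathWeight P (Fin.cons x w : Fin (T + 2) → α) = P x (w 0) * pathWeight P w := by
  simp only [pathWeight, Fin.prod_univ_succ, Fin.castSucc_zero, Fin.cons_zero, Fin.cons_succ,
    ← Fin.succ_castSucc]

variable [Fintype α] [DecidableEq α]

lemma sum_paths_from_succ {T : ℕ} (x : α) (f : (Fin (T + 2) → α) → ℝ) :
    ∑ v : Fin (T + 2) → α, (if v 0 = x then pathWeight P v * f v else 0) =
      ∑ y, P x y * ∑ w : Fin (T + 1) → α,
        (if w 0 = y then pathWeight P w * f (Fin.cons x w) else 0) := by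
  simp only [sum_fun_fin_succ (n := T + 1), Fin.cons_zero, pathWeight_cons, mul_sum, mul_ite,
    mul_zero, sum_ite_irrel, sum_const_zero, sum_ite_eq', mem_univ, if_true]
  rw [sum_comm]
  refine sum_congr rfl fun w _ => ?_
  rw [sum_ite_eq univ (w 0), if_pos (mem_univ _), mul_assoc]

lemma sum_paths_from_le_one (hP : ∀ x y, 0 ≤ P x y) (hP₁ : ∀ x, ∑ y, P x y ≤ 1) :
    ∀ (T : ℕ) (x : α) (f : (Fin (T + 1) → α) → ℝ), (∀ v, f v ≤ 1) →
      ∑ v : Fin (T + 1) → α, (if v 0 = x then pathWeight P v * f v else 0) ≤ 1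
  | 0, x, f, hf => by
    rw [← (Equiv.funUnique (Fin 1) α).symm.sum_comp]
    simp [pathWeight, hf]
  | T + 1, x, f, hf => by
    rw [sum_paths_from_succ]
    calc ∑ y, P x y * _ ≤ ∑ y, P x y * 1 := sum_le_sum fun y _ =>
          mul_le_mul_of_nonneg_left (sum_paths_from_le_one hP hP₁ T y _ fun w => hf _) (hP x y)
      _ ≤ 1 := by simpa using hP₁ x

end Paths

section Walk

variable (G : SimpleGraph V) [DecidableRel G.Adj]

lemma walkP_nonneg (x y : V) : 0 ≤ walkP G x y := by
  unfold walkP; split_ifs <;> positivity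

lemma degree_mul_walkP_comm (x y : V) :
    (G.degree x : ℝ) * walkP G x y = G.degree y * walkP G y x := by
  unfold walkP
  obtain rfl | hxy := eq_or_ne x y
  · rfl
  simp only [if_neg hxy, if_neg hxy.symm, G.adj_comm y x]
  split_ifs with hadj
  · have hx : (G.degree x : ℝ) ≠ 0 := by
      exact_mod_cast (G.degree_pos_iff_exists_adj x).2 ⟨y, hadj⟩ |>.ne'
    have hy : (G.degree y : ℝ) ≠ 0 := by
      exact_mod_cast (G.degree_pos_iff_exists_adj y).2 ⟨x, hadj.symm⟩ |>.ne'
    field_simp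
  · simp

lemma pset_nonneg (x : V) (S : Finset V) : 0 ≤ pset G x S :=
  sum_nonneg fun y _ => walkP_nonneg G x y

lemma pset_eq_of_notMem {x : V} {S : Finset V} (hx : x ∉ S) :
    pset G x S = #(S.filter (G.Adj x)) / (2 * G.degree x) := by
  have hwalk : ∀ y ∈ S, walkP G x y = if G.Adj x y then 1 / (2 * (G.degree x : ℝ)) else 0 :=
    fun y hy => if_neg (ne_of_mem_of_not_mem hy hx).symm
  rw [pset, sum_congr rfl hwalk, sum_ite, sum_const_zero, add_zero,
    sum_const, nsmul_eq_mul, mul_one_div]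

lemma degree_mul_pset_of_notMem {x : V} {S : Finset V} (hx : x ∉ S) :
    G.degree x * pset G x S = #(S.filter (G.Adj x)) / 2 := by
  rw [pset_eq_of_notMem G hx]
  obtain hd | hd := eq_or_ne (G.degree x) 0
  · have := G.card_filter_adj_le_degree x S
    simp [hd, show #(S.filter (G.Adj x)) = 0 by omega]
  · field_simp

lemma pset_le_half_of_notMem {x : V} {S : Finset V} (hx : x ∉ S) : pset G x S ≤ 1 / 2 := by
  rw [pset_eq_of_notMem G hx]
  obtain hd | hd := eq_or_ne (G.degree x : ℝ) 0
  · simp [hd]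
  rw [div_le_iff₀ (by positivity [(Nat.cast_nonneg _).lt_of_ne' hd])]
  have := G.card_filter_adj_le_degree x S
  linarith [(Nat.cast_le (α := ℝ)).2 this]

lemma sum_walkP_le_one (x : V) : ∑ y, walkP G x y ≤ 1 := by
  rw [← add_sum_erase _ _ (mem_univ x)]
  have hself : walkP G x x = 1 / 2 := if_pos rfl
  have hrest : pset G x (univ.erase x) ≤ 1 / 2 := pset_le_half_of_notMem G (notMem_erase x univ)
  rw [pset] at hrest
  linarith

lemma pset_le_one (x : V) (S : Finset V) : pset G x S ≤ 1 :=
  (sum_le_sum_of_subset_of_nonneg (subset_univ S)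
    fun y _ _ => walkP_nonneg G x y).trans (sum_walkP_le_one G x)

lemma sum_compl_card_filter_adj_s11 (A : Finset V) :
    ∑ y ∈ Aᶜ, (#(A.filter (G.Adj y)) : ℝ) = bdry G A := by
  simp only [bdry, natCast_card_filter]
  rw [sum_comm]
  simp only [G.adj_comm]

lemma escProb_eq_sum_paths (x : V) (T : ℕ) (A : Finset V) :
    escProb G x T A = ∑ v : Fin (T + 1) → V,
      (if v 0 = x then pathWeight (walkP G) v * (if ∃ j, v j ∉ A then 1 else 0) else 0) := by
  refine sum_congr rfl fun v _ => ?_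
  simp only [ite_and, mul_ite, mul_one, mul_zero, pathWeight]

lemma escProb_nonneg (x : V) (T : ℕ) (A : Finset V) : 0 ≤ escProb G x T A :=
  sum_nonneg fun v _ => by
    split_ifs
    · exact prod_nonneg fun j _ => walkP_nonneg G _ _
    · exact le_rfl

lemma escProb_le_one (x : V) (T : ℕ) (A : Finset V) : escProb G x T A ≤ 1 := by
  rw [escProb_eq_sum_paths]
  exact sum_paths_from_le_one _ (walkP_nonneg G) (sum_walkP_le_one G) T x _ fun v => by
    split_ifs <;> norm_num

lemma escProb_zero_of_mem {x : V} {A : Finset V} (hx : x ∈ A) : escProb G x 0 A = 0 :=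
  sum_eq_zero fun v _ => if_neg fun ⟨hv, j, hj⟩ => hj (by rwa [Fin.fin_one_eq_zero j, hv])

lemma escProb_succ_of_mem {x : V} {A : Finset V} (hx : x ∈ A) (T : ℕ) :
    escProb G x (T + 1) A = ∑ y, walkP G x y * escProb G y T A := by
  simp only [escProb_eq_sum_paths, sum_paths_from_succ, Fin.exists_fin_succ, Fin.cons_zero,
    Fin.cons_succ, hx, not_true_eq_false, false_or]

lemma sum_degree_mul_escProb_succ (A : Finset V) (T : ℕ) :
    ∑ x ∈ A, G.degree x * escProb G x (T + 1) A =
      ∑ y, G.degree y * escProb G y T A * pset G y A := by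
  calc ∑ x ∈ A, G.degree x * escProb G x (T + 1) A
      = ∑ x ∈ A, ∑ y, G.degree y * escProb G y T A * walkP G y x := by
        refine sum_congr rfl fun x hx => ?_
        rw [escProb_succ_of_mem G hx, mul_sum]
        refine sum_congr rfl fun y _ => ?_
        rw [← mul_assoc, degree_mul_walkP_comm]
        ring
    _ = _ := by simp only [sum_comm (s := A), pset, mul_sum]

theorem sum_degree_mul_escProb_le (A : Finset V) (T : ℕ) :
    ∑ x ∈ A, G.degree x * escProb G x T A ≤ T * bdry G A / 2 := by
  induction T with
  | zero =>
    rw [sum_eq_zero fun x hx => by rw [escProb_zero_of_mem G hx, mul_zero]]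
    simp
  | succ T ih =>
    rw [sum_degree_mul_escProb_succ, ← sum_add_sum_compl A]
    have hin : ∑ y ∈ A, G.degree y * escProb G y T A * pset G y A ≤ T * bdry G A / 2 :=
      (sum_le_sum fun y _ => mul_le_of_le_one_right
        (mul_nonneg (Nat.cast_nonneg _) (escProb_nonneg G y T A)) (pset_le_one G y A)).trans ih
    have hout : ∑ y ∈ Aᶜ, G.degree y * escProb G y T A * pset G y A ≤ bdry G A / 2 := by
      rw [← sum_compl_card_filter_adj_s11, sum_div]
      refine sum_le_sum fun y hy => ?_
      rw [← degree_mul_pset_of_notMem G (mem_compl.1 hy), mul_right_comm]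
      exact mul_le_of_le_one_right
        (mul_nonneg (Nat.cast_nonneg _) (pset_nonneg G y A)) (escProb_le_one G y T A)
    push_cast
    linarith

end Walk

theorem statement11_general (G : SimpleGraph V) [DecidableRel G.Adj]
    (A : Finset V) (T : ℕ) :
    (1 / vol G A) * ∑ x ∈ A, (G.degree x : ℝ) * escProb G x T A ≤
      T * phiCond G A / 2 := by
  have hvol : 0 ≤ vol G A := sum_nonneg fun x _ => Nat.cast_nonneg _
  calc (1 / vol G A) * ∑ x ∈ A, (G.degree x : ℝ) * escProb G x T A
      ≤ (T * bdry G A / 2) / vol G A := by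
        rw [one_div_mul_eq_div]
        exact div_le_div_of_nonneg_right (sum_degree_mul_escProb_le G A T) hvol
    _ = T * phiCond G A / 2 := by rw [phiCond]; ring

/-- The volume-weighted average escape probability from a nonempty set `A` within `T`
steps of the lazy random walk is at most `T φ(A)/2`:
`(1/μ(A)) Σ_{x∈A} d(x) esc(x,T,A) ≤ T φ(A)/2`. -/
theorem statement11 (G : SimpleGraph V) [DecidableRel G.Adj]
    (A : Finset V) (hA : A.Nonempty) (T : ℕ) :
    (1 / vol G A) * ∑ x ∈ A, (G.degree x : ℝ) * escProb G x T A ≤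
      T * phiCond G A / 2 :=
  statement11_general G A T
end
end
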